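/- Let F be a field, h ∈ F[x] with deg h = w ≥ 1, let r be an integer with 0 ≤ r ≤ w, let m₁ ≥ 1 be an integer, and let G ∈ F[x] with deg G < m₁·w. Suppose y₁, …, y_{m₁} ∈ F are distinct elements such that deg(G mod (h − y_i)) < r for every i ∈ [m₁]. Then there exist polynomials H₀, …, H_{r−1} ∈ F[x], each of degree at most m₁ − 1, such that G(x) = Σ_{j=0}^{r−1} H_j(h(x))·x^j; in particular, deg G ≤ (m₁ − 1)·w + r − 1. -/

import Mathlib

/-!
Write `G = ∑_{k < m₁} c_k h^k` with `deg c_k < deg h`. Reducing modulo `h - y` substitutes `y`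
for `h`, and `deg (∑_k y^k c_k) < deg (h - y)`, so `G mod (h - y_i) = ∑_k y_i^k c_k`. For
`j ≥ r`, the coefficient of `x^j` of this remainder is `∑_k (c_k)_j y_i^k = 0` at the `m₁`
distinct points `y_i`, so the Vandermonde matrix forces `(c_k)_j = 0`: every `c_k` has degree
`< r`. Collecting the coefficients of `x^j` in `∑_k c_k h^k` gives `H_j = ∑_k (c_k)_j Z^k`.
-/

open Polynomial Finset

section Field
variable {F : Type*} [Field F]

theorem degree_div_lt_of_degree_lt_succ_mul {h G : F[X]} (hh : h ≠ 0) {m : ℕ}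
    (hG : G.degree < ↑((m + 1) * h.natDegree)) : (G / h).degree < ↑(m * h.natDegree) := by
  by_cases hq : G / h = 0
  · rw [hq, degree_zero]; exact WithBot.bot_lt_coe _
  have hmul : (h * (G / h)).degree < ↑((m + 1) * h.natDegree) := by
    rw [← sub_eq_of_eq_add' (EuclideanDomain.mod_add_div G h).symm]
    refine (degree_sub_le _ _).trans_lt (max_lt hG ((degree_mod_lt G hh).trans_le ?_))
    rw [degree_eq_natDegree hh]
    exact_mod_cast Nat.le_mul_of_pos_left _ m.succ_pos
  rw [← natDegree_lt_iff_degree_lt (mul_ne_zero hh hq), natDegree_mul hh hq,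
    Nat.succ_mul] at hmul
  rw [← natDegree_lt_iff_degree_lt hq]
  omega

theorem exists_eq_sum_mul_pow {h : F[X]} (hh : h ≠ 0) :
    ∀ (m : ℕ) (G : F[X]), G.degree < ↑(m * h.natDegree) →
      ∃ c : Fin m → F[X], (∀ k, (c k).degree < h.degree) ∧ G = ∑ k, c k * h ^ (k : ℕ)
  | 0, G, hG => ⟨finZeroElim, finZeroElim, by simpa using hG⟩
  | m + 1, G, hG => by
    obtain ⟨c, hc, hq⟩ :=
      exists_eq_sum_mul_pow hh m (G / h) (degree_div_lt_of_degree_lt_succ_mul hh hG)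
    refine ⟨Fin.cons (G % h) c, Fin.cases (degree_mod_lt G hh) hc, ?_⟩
    rw [Fin.sum_univ_succ]
    simp only [Fin.cons_zero, Fin.cons_succ, Fin.val_zero, Fin.val_succ, pow_zero, mul_one,
      pow_succ', mul_left_comm _ h, ← mul_sum, ← hq]
    exact (EuclideanDomain.mod_add_div G h).symm

theorem sum_mul_pow_mod_sub_C {n : ℕ} {h : F[X]} (hh : 0 < h.degree) {c : Fin n → F[X]}
    (hc : ∀ k, (c k).degree < h.degree) (y : F) :
    (∑ k, c k * h ^ (k : ℕ)) % (h - C y) = ∑ k : Fin n, y ^ (k : ℕ) • c k := by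
  have hdeg : (h - C y).degree = h.degree := degree_sub_C hh
  have hne : h - C y ≠ 0 := ne_zero_of_degree_gt (hh.trans_eq hdeg.symm)
  have hdvd : h - C y ∣ ∑ k, c k * h ^ (k : ℕ) - ∑ k : Fin n, y ^ (k : ℕ) • c k := by
    rw [← sum_sub_distrib]
    refine dvd_sum fun k _ => ?_
    rw [smul_eq_C_mul, mul_comm (C _), ← mul_sub, C_pow]
    exact (sub_dvd_pow_sub_pow _ _ _).mul_left _
  have hlt : (∑ k : Fin n, y ^ (k : ℕ) • c k).degree < (h - C y).degree := by
    rw [hdeg]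
    refine (degree_sum_le _ _).trans_lt
      ((Finset.sup_lt_iff (bot_lt_of_lt hh)).2 fun k _ => ?_)
    exact (degree_smul_le _ _).trans_lt (hc k)
  rw [← sub_add_cancel (∑ k, c k * h ^ (k : ℕ)) (∑ k : Fin n, y ^ (k : ℕ) • c k),
    add_mod, EuclideanDomain.mod_eq_zero.2 hdvd, zero_add, (mod_eq_self_iff hne).2 hlt]

theorem degree_lt_of_forall_degree_sum_pow_smul_lt {n r : ℕ} {c : Fin n → F[X]}
    {y : Fin n → F} (hy : Function.Injective y)
    (hr : ∀ i, (∑ k : Fin n, y i ^ (k : ℕ) • c k).degree < r) (k : Fin n) :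
    (c k).degree < r := by
  refine (degree_lt_iff_coeff_zero _ _).2 fun j hj => ?_
  have hvanish : (fun k => (c k).coeff j) = 0 := by
    refine Matrix.eq_zero_of_forall_index_sum_pow_mul_eq_zero hy fun i => ?_
    have := (degree_lt_iff_coeff_zero _ _).1 (hr i) j hj
    simpa only [finsetSum_coeff, coeff_smul, smul_eq_mul] using this
  exact congr_fun hvanish k

end Field

section Semiring
variable {R : Type*} [CommSemiring R] {n : ℕ}

/-- Reading `∑ k, c k * Z ^ k` as a polynomial in `X` and `Z`, the coefficient of `X ^ j`, as a
polynomial in `Z`. -/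
noncomputable def coeffSlice (c : Fin n → R[X]) (j : ℕ) : R[X] :=
  ∑ k : Fin n, C ((c k).coeff j) * X ^ (k : ℕ)

theorem natDegree_coeffSlice_le (c : Fin n → R[X]) (j : ℕ) :
    (coeffSlice c j).natDegree ≤ n - 1 :=
  natDegree_sum_le_of_forall_le _ _ fun k _ =>
    (natDegree_C_mul_X_pow_le _ _).trans (Nat.le_sub_one_of_lt k.isLt)

theorem sum_mul_pow_eq_sum_coeffSlice_comp_mul_X_pow {r : ℕ} {c : Fin n → R[X]}
    (hc : ∀ k, (c k).degree < r) (h : R[X]) :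
    ∑ k, c k * h ^ (k : ℕ) = ∑ j ∈ range r, (coeffSlice c j).comp h * X ^ j := by
  have hexpand : ∀ k, c k = ∑ j ∈ range r, C ((c k).coeff j) * X ^ j := fun k => by
    ext i
    simp only [finsetSum_coeff, coeff_C_mul_X_pow, sum_ite_eq, mem_range]
    split_ifs with hi
    · rfl
    · exact coeff_eq_zero_of_degree_lt ((hc k).trans_le (by exact_mod_cast not_lt.1 hi))
  simp only [coeffSlice, Polynomial.sum_comp, mul_comp, C_comp, X_pow_comp, sum_mul]
  conv_lhs => rw [funext hexpand]
  simp only [sum_mul]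
  rw [sum_comm]
  exact sum_congr rfl fun j _ => sum_congr rfl fun k _ => by ring

theorem degree_sum_comp_mul_X_pow_lt {r d : ℕ} {H : ℕ → R[X]}
    (hH : ∀ j, (H j).natDegree ≤ d) (h : R[X]) :
    (∑ j ∈ range r, (H j).comp h * X ^ j).degree < ↑(d * h.natDegree + r) := by
  refine (degree_sum_le _ _).trans_lt
    ((Finset.sup_lt_iff (WithBot.bot_lt_coe _)).2 fun j hj => ?_)
  refine (degree_le_natDegree).trans_lt (WithBot.coe_lt_coe.2 ?_)
  calc ((H j).comp h * X ^ j).natDegree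
      ≤ (H j).natDegree * h.natDegree + j :=
        natDegree_mul_le.trans (add_le_add natDegree_comp_le (natDegree_X_pow_le _))
    _ < d * h.natDegree + r :=
        add_lt_add_of_le_of_lt (Nat.mul_le_mul_right _ (hH j)) (mem_range.1 hj)

end Semiring

theorem tamo_barg_global_form_general
    (F : Type*) [Field F] (h : F[X]) (w r m₁ : ℕ)
    (hdeg : h.natDegree = w) (hw : 1 ≤ w)
    (G : F[X]) (hG : G.degree < ((m₁ * w : ℕ) : WithBot ℕ))
    (y : Fin m₁ → F) (hy : Function.Injective y)
    (hGmod : ∀ i : Fin m₁, (G % (h - C (y i))).degree < ((r : ℕ) : WithBot ℕ)) :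
    ∃ H : ℕ → F[X],
      (∀ j, j < r → (H j).degree ≤ ((m₁ - 1 : ℕ) : WithBot ℕ)) ∧
      G = ∑ j ∈ Finset.range r, (H j).comp h * X ^ j ∧
      G.degree < (((m₁ - 1) * w + r : ℕ) : WithBot ℕ) := by
  subst hdeg
  have hpos : 0 < h.degree := natDegree_pos_iff_degree_pos.1 hw
  obtain ⟨c, hc, rfl⟩ := exists_eq_sum_mul_pow (ne_zero_of_degree_gt hpos) m₁ G hG
  have hcr : ∀ k, (c k).degree < r := degree_lt_of_forall_degree_sum_pow_smul_lt hy fun i => by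
    simpa only [sum_mul_pow_mod_sub_C hpos hc] using hGmod i
  rw [sum_mul_pow_eq_sum_coeffSlice_comp_mul_X_pow hcr h]
  exact ⟨coeffSlice c, fun j _ => degree_le_of_natDegree_le (natDegree_coeffSlice_le c j), rfl,
    degree_sum_comp_mul_X_pow_lt (natDegree_coeffSlice_le c) h⟩

/-- Lemma 4 of the paper, global form. If `deg G < m₁·w` and the
remainders of `G` modulo `h - y_i` have degree `< r ≤ w = deg h` for `m₁` distinct `y_i`,
then there are polynomials `H_0, …, H_{r-1}` of degree `≤ m₁ - 1` with
`G(x) = ∑_{j<r} H_j(h(x))·x^j`; in particular `deg G ≤ (m₁-1)·w + r - 1`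
(expressed as `deg G < (m₁-1)·w + r`). -/
theorem tamo_barg_global_form
    (F : Type*) [Field F] (h : F[X]) (w r m₁ : ℕ)
    (hdeg : h.natDegree = w) (hw : 1 ≤ w) (hr : r ≤ w) (hm₁ : 1 ≤ m₁)
    (G : F[X]) (hG : G.degree < ((m₁ * w : ℕ) : WithBot ℕ))
    (y : Fin m₁ → F) (hy : Function.Injective y)
    (hGmod : ∀ i : Fin m₁, (G % (h - C (y i))).degree < ((r : ℕ) : WithBot ℕ)) :
    ∃ H : ℕ → F[X],
      (∀ j, j < r → (H j).degree ≤ ((m₁ - 1 : ℕ) : WithBot ℕ)) ∧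
      G = ∑ j ∈ Finset.range r, (H j).comp h * X ^ j ∧
      G.degree < (((m₁ - 1) * w + r : ℕ) : WithBot ℕ) :=
  tamo_barg_global_form_general F h w r m₁ hdeg hw G hG y hy hGmod
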